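/- arXiv:1406.1972 — 4 statements merged into one kernel-verified Lean document; each statement's English description precedes it below -/
import Mathlib

section
/- Let P(𝒞,z) = Σ_{(i,j)∈S(P)} α_{i,j} 𝒞^i z^j ∈ ℂ[𝒞,z] and set M(P) = min_{(i,j)∈S(P)} (i−j). If Σ_{i : (i, i−M(P))∈S(P)} α_{i, i−M(P)} = 0 and Σ_{i : (i, i−M(P))∈S(P)} i·α_{i, i−M(P)} ≠ 0, then there exists exactly one probability branch of P at ∞. -/
/-!
Writing a branch as `f = w·u` with `u(0) = 1`, the substitution `𝒞 = w·u`, `z = w⁻¹` turns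
`P` into `w^M · Q(u)`, where `Q(u) = ∑ α_{i,j} w^{i-j-M} u^i` is a polynomial in `u` with
power series coefficients. Modulo `w`, only the terms with `i - j = M` survive, so the two
hypotheses say exactly that `u = 1` is a simple root of `Q` modulo `w`. Hensel's lemma in `ℂ⟦w⟧`
lifts it to a unique root.
-/

open Finset

/-- The variable `w` in the field of formal Laurent series `ℂ((w))`. -/
noncomputable def laurentVar : LaurentSeries ℂ := HahnSeries.single 1 1

/-- A probability branch at `∞` of the bivariate polynomial
`P(𝒞,z) = ∑_{(i,j) ∈ supp α} α (i,j) 𝒞^i z^j` (encoded by its coefficient finsupp `α`):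
a formal power series `f(w) = w + ∑_{l ≥ 2} a_l w^l` such that substituting `𝒞 = f(w)`
and `z = w⁻¹` into `P` yields `0` in `ℂ((w))`. -/
def IsProbabilityBranch (α : (ℕ × ℕ) →₀ ℂ) (f : PowerSeries ℂ) : Prop :=
  PowerSeries.coeff 0 f = 0 ∧ PowerSeries.coeff 1 f = 1 ∧
    ∑ p ∈ α.support,
      (α p) • ((HahnSeries.ofPowerSeries ℤ ℂ f) ^ p.1 * (laurentVar⁻¹) ^ p.2) = 0

namespace Polynomial

variable {S : Type*} [CommRing S]

theorem eval_dvd_newtonMap_sub (P : S[X]) (x : S) : P.eval x ∣ P.newtonMap x - x := by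
  rw [newtonMap_apply, coe_aeval_eq_eval, sub_sub_cancel_left]
  exact (dvd_mul_left _ _).neg_right

theorem eval_sq_dvd_eval_newtonMap (P : S[X]) {x : S} (h : IsUnit (P.derivative.eval x)) :
    P.eval x ^ 2 ∣ P.eval (P.newtonMap x) := by
  set d := Ring.inverse (P.derivative.eval x)
  obtain ⟨c, hc⟩ := P.binomExpansion x (-(d * P.eval x))
  have hd : P.derivative.eval x * d = 1 := Ring.mul_inverse_cancel _ h
  have : P.eval (P.newtonMap x) = c * d ^ 2 * P.eval x ^ 2 := by
    rw [newtonMap_apply]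
    simp only [coe_aeval_eq_eval]
    rw [sub_eq_add_neg, hc]
    linear_combination (-P.eval x) * hd
  exact this ▸ dvd_mul_left _ _

end Polynomial

namespace PowerSeries

variable {R : Type*} [CommRing R]

theorem isUnit_of_X_dvd_sub {a b : R⟦X⟧} (ha : IsUnit a) (h : X ∣ b - a) : IsUnit b := by
  rw [X_dvd_iff, map_sub, sub_eq_zero] at h
  rw [isUnit_iff_constantCoeff] at ha ⊢
  exact h ▸ ha

theorem eq_zero_of_forall_X_pow_dvd {f : R⟦X⟧} (h : ∀ n, X ^ n ∣ f) : f = 0 := by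
  ext n
  exact X_pow_dvd_iff.mp (h (n + 1)) n n.lt_succ_self

theorem X_pow_dvd_sub_of_le {u : ℕ → R⟦X⟧} (hu : ∀ n, X ^ n ∣ u (n + 1) - u n) {m n : ℕ}
    (hmn : m ≤ n) : X ^ m ∣ u n - u m := by
  induction n, hmn using Nat.le_induction with
  | base => simp
  | succ n hmn ih =>
    rw [← sub_add_sub_cancel]
    exact dvd_add ((pow_dvd_pow X hmn).trans (hu n)) ih

theorem exists_forall_X_pow_dvd_sub {u : ℕ → R⟦X⟧} (hu : ∀ n, X ^ n ∣ u (n + 1) - u n) :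
    ∃ U, ∀ n, X ^ n ∣ U - u n := by
  have hmod : ∀ {m : ℕ} {a b : R⟦X⟧},
      a ≡ b [SMOD ((Ideal.span {(X : R⟦X⟧)}) ^ m • ⊤ : Submodule R⟦X⟧ R⟦X⟧)] ↔ X ^ m ∣ b - a := by
    intro m a b
    rw [SModEq.sub_mem, smul_eq_mul, Ideal.mul_top, Ideal.span_singleton_pow,
      Ideal.mem_span_singleton, ← dvd_neg, neg_sub]
  obtain ⟨U, hU⟩ := IsPrecomplete.prec' u fun hmn => hmod.mpr (X_pow_dvd_sub_of_le hu hmn)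
  exact ⟨U, fun n => hmod.mp (hU n)⟩

theorem constantCoeff_X_pow_toNat {n M : ℤ} (hM : M ≤ n) :
    constantCoeff (X ^ (n - M).toNat : R⟦X⟧) = if n = M then 1 else 0 := by
  have : (n - M).toNat = 0 ↔ n = M := by omega
  simp only [map_pow, constantCoeff_X, zero_pow_eq, this]

theorem eq_of_eval_eq_zero_of_X_dvd_sub (P : Polynomial R⟦X⟧) {a b : R⟦X⟧}
    (ha : P.eval a = 0) (hb : P.eval b = 0) (hab : X ∣ b - a)
    (hP : IsUnit (P.derivative.eval a)) : a = b := by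
  obtain ⟨c, hc⟩ := P.binomExpansion a (b - a)
  rw [add_sub_cancel, ha, hb] at hc
  have hfactor : (b - a) * (P.derivative.eval a + c * (b - a)) = 0 := by linear_combination -hc
  have hunit : IsUnit (P.derivative.eval a + c * (b - a)) :=
    isUnit_of_X_dvd_sub hP (by simpa using hab.mul_left c)
  exact (sub_eq_zero.mp (hunit.mul_left_eq_zero.mp hfactor)).symm

/-- Hensel's lemma in `R⟦X⟧` by Newton iteration; unlike `HenselianRing`, `P` need not be monic. -/
theorem existsUnique_eval_eq_zero_of_X_dvd (P : Polynomial R⟦X⟧) {a₀ : R⟦X⟧}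
    (h₀ : X ∣ P.eval a₀) (h₁ : IsUnit (P.derivative.eval a₀)) :
    ∃! a, X ∣ a - a₀ ∧ P.eval a = 0 := by
  have isUnit_derivative {a : R⟦X⟧} (ha : X ∣ a - a₀) : IsUnit (P.derivative.eval a) :=
    isUnit_of_X_dvd_sub h₁ (ha.trans (Polynomial.sub_dvd_eval_sub _ _ _))
  set x : ℕ → R⟦X⟧ := fun n => P.newtonMap^[n] a₀
  have hx_succ (n : ℕ) : x (n + 1) = P.newtonMap (x n) := Function.iterate_succ_apply' ..
  have newton (n : ℕ) : X ∣ x n - a₀ ∧ X ^ (n + 1) ∣ P.eval (x n) := by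
    induction n with
    | zero => simpa [x] using h₀
    | succ n ih =>
      have hstep : X ∣ x (n + 1) - x n := (dvd_pow_self X n.succ_ne_zero).trans
        (hx_succ n ▸ ih.2.trans (P.eval_dvd_newtonMap_sub (x n)))
      refine ⟨sub_add_sub_cancel (x (n + 1)) (x n) a₀ ▸ dvd_add hstep ih.1, ?_⟩
      calc X ^ (n + 1 + 1) ∣ (X ^ (n + 1)) ^ 2 := by rw [← pow_mul]; exact pow_dvd_pow X (by omega)
        _ ∣ P.eval (x n) ^ 2 := pow_dvd_pow_of_dvd ih.2 2
        _ ∣ P.eval (x (n + 1)) := hx_succ n ▸ P.eval_sq_dvd_eval_newtonMap (isUnit_derivative ih.1)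
  obtain ⟨U, hU⟩ := exists_forall_X_pow_dvd_sub fun n =>
    (pow_dvd_pow X n.le_succ).trans ((newton n).2.trans (hx_succ n ▸ P.eval_dvd_newtonMap_sub _))
  have hUa₀ : X ∣ U - a₀ :=
    sub_add_sub_cancel U (x 1) a₀ ▸ dvd_add (pow_one (X : R⟦X⟧) ▸ hU 1) (newton 1).1
  have hPU : P.eval U = 0 := eq_zero_of_forall_X_pow_dvd fun n =>
    sub_add_cancel (P.eval U) (P.eval (x n)) ▸ dvd_add
      ((hU n).trans (Polynomial.sub_dvd_eval_sub _ _ _))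
      ((pow_dvd_pow X n.le_succ).trans (newton n).2)
  refine ⟨U, ⟨hUa₀, hPU⟩, fun b ⟨hb, hPb⟩ => eq_of_eval_eq_zero_of_X_dvd_sub P hPb hPU ?_
    (isUnit_derivative hb)⟩
  exact sub_sub_sub_cancel_right U b a₀ ▸ dvd_sub hUa₀ hb

end PowerSeries

open PowerSeries

/-- `Q(u) = w^{-M} P(w·u, w⁻¹)`; the truncation `toNat` is harmless once `M ≤ i - j` on the
support of `α`. -/
noncomputable def branchPolynomial (α : (ℕ × ℕ) →₀ ℂ) (M : ℤ) : Polynomial ℂ⟦X⟧ :=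
  ∑ p ∈ α.support,
    Polynomial.C (C (α p) * X ^ ((p.1 : ℤ) - p.2 - M).toNat) * Polynomial.X ^ p.1

theorem laurentVar_eq_ofPowerSeries_X : laurentVar = HahnSeries.ofPowerSeries ℤ ℂ X :=
  HahnSeries.ofPowerSeries_X.symm

theorem laurentVar_ne_zero : laurentVar ≠ 0 :=
  HahnSeries.single_ne_zero one_ne_zero

theorem ofPowerSeries_X_mul_pow_mul_inv_pow (u : ℂ⟦X⟧) (i j : ℕ) :
    HahnSeries.ofPowerSeries ℤ ℂ (X * u) ^ i * laurentVar⁻¹ ^ j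
      = laurentVar ^ ((i : ℤ) - j) * HahnSeries.ofPowerSeries ℤ ℂ (u ^ i) := by
  rw [map_mul, map_pow, ← laurentVar_eq_ofPowerSeries_X, zpow_sub₀ laurentVar_ne_zero,
    zpow_natCast, zpow_natCast, mul_pow, inv_pow]
  ring

variable {α : (ℕ × ℕ) →₀ ℂ} {M : ℤ}

theorem sum_smul_ofPowerSeries_X_mul (hM : ∀ p ∈ α.support, M ≤ (p.1 : ℤ) - p.2) (u : ℂ⟦X⟧) :
    ∑ p ∈ α.support,
      α p • (HahnSeries.ofPowerSeries ℤ ℂ (X * u) ^ p.1 * laurentVar⁻¹ ^ p.2)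
      = laurentVar ^ M * HahnSeries.ofPowerSeries ℤ ℂ ((branchPolynomial α M).eval u) := by
  simp only [branchPolynomial, Polynomial.eval_finsetSum, map_sum, mul_sum]
  refine sum_congr rfl fun p hp => ?_
  have he : (p.1 : ℤ) - p.2 = M + ((p.1 : ℤ) - p.2 - M).toNat := by
    have := hM p hp; omega
  rw [ofPowerSeries_X_mul_pow_mul_inv_pow]
  nth_rw 1 [he]
  rw [zpow_add₀ laurentVar_ne_zero, zpow_natCast]
  simp only [Polynomial.eval_mul, Polynomial.eval_C, Polynomial.eval_pow, Polynomial.eval_X,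
    map_mul, map_pow, HahnSeries.ofPowerSeries_C, ← laurentVar_eq_ofPowerSeries_X,
    ← HahnSeries.C_mul_eq_smul]
  ring

theorem constantCoeff_branchPolynomial_eval_one (hM : ∀ p ∈ α.support, M ≤ (p.1 : ℤ) - p.2) :
    constantCoeff ((branchPolynomial α M).eval 1)
      = ∑ p ∈ α.support with (p.1 : ℤ) - p.2 = M, α p := by
  simp only [branchPolynomial, Polynomial.eval_finsetSum, Polynomial.eval_mul, Polynomial.eval_C,
    Polynomial.eval_pow, Polynomial.eval_X, one_pow, mul_one, map_sum, map_mul, constantCoeff_C]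
  rw [sum_filter]
  refine sum_congr rfl fun p hp => ?_
  rw [constantCoeff_X_pow_toNat (hM p hp), mul_ite, mul_one, mul_zero]

theorem constantCoeff_branchPolynomial_derivative_eval_one
    (hM : ∀ p ∈ α.support, M ≤ (p.1 : ℤ) - p.2) :
    constantCoeff ((branchPolynomial α M).derivative.eval 1)
      = ∑ p ∈ α.support with (p.1 : ℤ) - p.2 = M, (p.1 : ℂ) * α p := by
  simp only [branchPolynomial, map_sum, Polynomial.derivative_C_mul_X_pow,
    Polynomial.eval_finsetSum]
  rw [sum_filter]
  refine sum_congr rfl fun p hp => ?_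
  simp only [Polynomial.eval_mul, Polynomial.eval_C, Polynomial.eval_pow, Polynomial.eval_X,
    Polynomial.eval_natCast, one_pow, mul_one, map_mul, map_natCast, constantCoeff_C,
    constantCoeff_X_pow_toNat (hM p hp)]
  split_ifs <;> ring

theorem isProbabilityBranch_iff (hM : ∀ p ∈ α.support, M ≤ (p.1 : ℤ) - p.2) {f : ℂ⟦X⟧} :
    IsProbabilityBranch α f ↔ ∃ u, f = X * u ∧ X ∣ u - 1 ∧ (branchPolynomial α M).eval u = 0 := by
  have hXmul (u : ℂ⟦X⟧) :
      IsProbabilityBranch α (X * u) ↔ X ∣ u - 1 ∧ (branchPolynomial α M).eval u = 0 := by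
    rw [IsProbabilityBranch, sum_smul_ofPowerSeries_X_mul hM,
      mul_eq_zero_iff_left (zpow_ne_zero M laurentVar_ne_zero),
      map_eq_zero_iff _ HahnSeries.ofPowerSeries_injective, X_dvd_iff, map_sub, map_one,
      sub_eq_zero, coeff_zero_eq_constantCoeff_apply, ← zero_add 1, coeff_succ_X_mul,
      coeff_zero_eq_constantCoeff_apply]
    simp only [map_mul, constantCoeff_X, zero_mul, true_and]
  constructor
  · intro hf
    obtain ⟨u, rfl⟩ := X_dvd_iff.mpr (coeff_zero_eq_constantCoeff_apply f ▸ hf.1)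
    exact ⟨u, rfl, (hXmul u).mp hf⟩
  · rintro ⟨u, rfl, hu⟩
    exact (hXmul u).mpr hu

/-- If `∑_{i : (i,i-M(P)) ∈ S(P)} α_{i,i-M(P)} = 0` and
`∑_{i : (i,i-M(P)) ∈ S(P)} i·α_{i,i-M(P)} ≠ 0`, where `M(P) = min_{(i,j) ∈ S(P)} (i-j)`,
then `P` has exactly one probability branch at `∞`. -/
theorem existsUnique_probabilityBranch
    (α : (ℕ × ℕ) →₀ ℂ) (hα : α ≠ 0)
    (hsum : ∑ p ∈ α.support.filter (fun p : ℕ × ℕ => (p.1 : ℤ) - (p.2 : ℤ) =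
        (α.support.image (fun q : ℕ × ℕ => (q.1 : ℤ) - (q.2 : ℤ))).min'
          ((Finsupp.support_nonempty_iff.mpr hα).image _)), α p = 0)
    (hsum' : ∑ p ∈ α.support.filter (fun p : ℕ × ℕ => (p.1 : ℤ) - (p.2 : ℤ) =
        (α.support.image (fun q : ℕ × ℕ => (q.1 : ℤ) - (q.2 : ℤ))).min'
          ((Finsupp.support_nonempty_iff.mpr hα).image _)), (p.1 : ℂ) * α p ≠ 0) :
    ∃! f : PowerSeries ℂ, IsProbabilityBranch α f := by
  set M := (α.support.image (fun q : ℕ × ℕ => (q.1 : ℤ) - (q.2 : ℤ))).min'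
    ((Finsupp.support_nonempty_iff.mpr hα).image _)
  have hM : ∀ p ∈ α.support, M ≤ (p.1 : ℤ) - p.2 := fun p hp =>
    min'_le _ _ (mem_image_of_mem _ hp)
  have hroot : X ∣ (branchPolynomial α M).eval 1 := by
    rw [X_dvd_iff, constantCoeff_branchPolynomial_eval_one hM]
    exact hsum
  have hsimple : IsUnit ((branchPolynomial α M).derivative.eval 1) := by
    rw [isUnit_iff_constantCoeff, constantCoeff_branchPolynomial_derivative_eval_one hM]
    exact hsum'.isUnit
  obtain ⟨u, hu, huniq⟩ := existsUnique_eval_eq_zero_of_X_dvd _ hroot hsimple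
  refine ⟨X * u, (isProbabilityBranch_iff hM).mpr ⟨u, rfl, hu⟩, fun f hf => ?_⟩
  obtain ⟨v, rfl, hv⟩ := (isProbabilityBranch_iff hM).mp hf
  rw [huniq v hv]
end

section
/- Let Q_1, …, Q_k ∈ ℂ[z] with deg Q_i ≤ i for all i, and write a_{i,i} for the coefficient of z^i in Q_i. Suppose p ∈ ℂ[z] has degree exactly n and satisfies the homogenized spectral problem Q_k p^{(k)} + λ Q_{k−1} p^{(k−1)} + ⋯ + λ^{k−1} Q_1 p′ = λ^k p for some λ ∈ ℂ. Then λ satisfies a_{k,k}·n(n−1)⋯(n−k+1) + λ·a_{k−1,k−1}·n(n−1)⋯(n−k+2) + ⋯ + λ^{k−1}·n·a_{1,1} = λ^k, where n(n−1)⋯(n−i+1) denotes the descending factorial (equal to 0 when i > n). -/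
open Polynomial Finset

/-! Only the top coefficient matters: since `deg Q_i ≤ i` and `deg p^{(i)} ≤ n - i`, the
coefficient of `z^n` in `Q_i p^{(i)}` is `a_{i,i} · n(n-1)⋯(n-i+1) · lc p`. Comparing the
coefficients of `z^n` on both sides of the spectral equation and cancelling `lc p ≠ 0`
gives the equation for `λ`. -/

theorem Polynomial.coeff_mul_iterate_derivative_natDegree {R : Type*} [Semiring R]
    {Q : R[X]} {i : ℕ} (hQ : Q.natDegree ≤ i) (p : R[X]) :
    (Q * derivative^[i] p).coeff p.natDegree
      = Q.coeff i * (p.natDegree.descFactorial i : R) * p.leadingCoeff := by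
  rcases le_or_gt i p.natDegree with hi | hi
  · obtain ⟨m, hm⟩ := Nat.exists_eq_add_of_le hi
    have hderiv : (derivative^[i] p).natDegree ≤ m := by
      simpa [hm] using p.natDegree_iterate_derivative i
    rw [leadingCoeff, hm, coeff_mul_add_eq_of_natDegree_le hQ hderiv,
      coeff_iterate_derivative, add_comm m i, nsmul_eq_mul, mul_assoc]
  · rw [iterate_derivative_eq_zero hi, Nat.descFactorial_eq_zero_iff_lt.mpr hi]
    simp

theorem eigenvalue_equation_general
    (k : ℕ) (Q : ℕ → Polynomial ℂ)
    (hdeg : ∀ i, 1 ≤ i → i ≤ k → (Q i).natDegree ≤ i)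
    (n : ℕ) (p : Polynomial ℂ) (hp : p ≠ 0) (hpn : p.natDegree = n)
    (l : ℂ)
    (heq : ∑ i ∈ Finset.Icc 1 k, (l ^ (k - i)) • (Q i * Polynomial.derivative^[i] p)
      = (l ^ k) • p) :
    ∑ i ∈ Finset.Icc 1 k, l ^ (k - i) * (Q i).coeff i * (n.descFactorial i : ℂ)
      = l ^ k := by
  subst hpn
  have htop := congrArg (coeff · p.natDegree) heq
  simp only [finsetSum_coeff, coeff_smul, smul_eq_mul, coeff_natDegree] at htop
  rw [sum_congr rfl fun i hi => by
    rw [coeff_mul_iterate_derivative_natDegree (hdeg i (mem_Icc.1 hi).1 (mem_Icc.1 hi).2)]]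
    at htop
  apply mul_right_cancel₀ (leadingCoeff_ne_zero.mpr hp)
  rw [sum_mul, ← htop]
  exact sum_congr rfl fun i _ => by ring

/-- If `p` of degree exactly `n` satisfies the homogenized spectral
problem `∑_{i=1}^k λ^{k-i} Q_i p^{(i)} = λ^k p` with `deg Q_i ≤ i`, then writing
`a_{i,i}` for the coefficient of `z^i` in `Q_i`, the eigenvalue `λ` satisfies
`∑_{i=1}^k λ^{k-i} · a_{i,i} · n(n-1)⋯(n-i+1) = λ^k`. -/
theorem eigenvalue_equation
    (k : ℕ) (hk : 1 ≤ k) (Q : ℕ → Polynomial ℂ)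
    (hdeg : ∀ i, 1 ≤ i → i ≤ k → (Q i).natDegree ≤ i)
    (n : ℕ) (p : Polynomial ℂ) (hp : p ≠ 0) (hpn : p.natDegree = n)
    (l : ℂ)
    (heq : ∑ i ∈ Finset.Icc 1 k, (l ^ (k - i)) • (Q i * Polynomial.derivative^[i] p)
      = (l ^ k) • p) :
    ∑ i ∈ Finset.Icc 1 k, l ^ (k - i) * (Q i).coeff i * (n.descFactorial i : ℂ)
      = l ^ k :=
  eigenvalue_equation_general k Q hdeg n p hp hpn l heq
end

section
/- Let P, Q, R ∈ ℂ[z] with P ≠ 0, P and Q coprime, and D := Q² − 4PR not identically zero. Suppose μ is a real signed Borel measure on ℂ with compact support such that for Lebesgue-a.e. z ∈ ℂ the Cauchy transform satisfies P(z)·𝒞_μ(z)² + Q(z)·𝒞_μ(z) + R(z) = 0. Then every root of D of odd multiplicity belongs to the support of μ. -/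
open MeasureTheory Polynomial

/-- The Cauchy transform of a real signed measure `μ` on `ℂ`, defined via the Jordan
decomposition `μ = μ⁺ - μ⁻`. -/
noncomputable def cauchyTransform (μ : SignedMeasure ℂ) (z : ℂ) : ℂ :=
  (∫ ξ, (z - ξ)⁻¹ ∂μ.toJordanDecomposition.posPart) -
    (∫ ξ, (z - ξ)⁻¹ ∂μ.toJordanDecomposition.negPart)

/-!
Off the support of `μ` the Cauchy transform `C` is holomorphic, so the a.e. relation
`P C² + Q C + R = 0` holds everywhere there, and completing the square gives
`(2 P C + Q)² = D`. Near a point `z₀` outside the support, `D` is therefore the square of a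
holomorphic function, so its order of vanishing at `z₀` is even.
-/

open Filter Topology Metric

section AnalyticOrder

variable {𝕜 : Type*} [NontriviallyNormedField 𝕜]

theorem Polynomial.analyticOrderAt_eval_eq_rootMultiplicity {p : 𝕜[X]} (hp : p ≠ 0) (z₀ : 𝕜) :
    analyticOrderAt (fun z => p.eval z) z₀ = p.rootMultiplicity z₀ := by
  obtain ⟨q, hpq, hq⟩ := p.exists_eq_pow_rootMultiplicity_mul_and_not_dvd hp z₀
  refine (AnalyticOnNhd.eval_polynomial p z₀ trivial).analyticOrderAt_eq_natCast.2
    ⟨fun z => q.eval z, AnalyticOnNhd.eval_polynomial q z₀ trivial,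
      fun h => hq (dvd_iff_isRoot.2 h), .of_forall fun z => ?_⟩
  conv_lhs => rw [hpq]
  simp

theorem Polynomial.even_rootMultiplicity_of_eventually_sq_eq {p : 𝕜[X]} {g : 𝕜 → 𝕜} {z₀ : 𝕜}
    (hg : AnalyticAt 𝕜 g z₀) (hgp : ∀ᶠ z in 𝓝 z₀, g z ^ 2 = p.eval z) :
    Even (p.rootMultiplicity z₀) := by
  rcases eq_or_ne p 0 with rfl | hp
  · simp
  have hord : (p.rootMultiplicity z₀ : ℕ∞) = 2 • analyticOrderAt g z₀ := by
    rw [← analyticOrderAt_eval_eq_rootMultiplicity hp, ← analyticOrderAt_pow hg 2]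
    exact analyticOrderAt_congr (hgp.mono fun z hz => hz.symm)
  have hfin : analyticOrderAt g z₀ ≠ ⊤ := fun h => by
    rw [h, nsmul_eq_mul] at hord
    exact ENat.natCast_ne_top _ (hord.trans (ENat.mul_top (by norm_num)))
  obtain ⟨m, hm⟩ := ENat.ne_top_iff_exists.1 hfin
  rw [← hm, two_nsmul] at hord
  exact ⟨m, by exact_mod_cast hord⟩

end AnalyticOrder

section CauchyTransform

variable {ν : Measure ℂ} [IsFiniteMeasure ν]

theorem hasDerivAt_integral_inv_sub {z₀ : ℂ} {r : ℝ} (hr : 0 < r) (hν : ν (ball z₀ r) = 0) :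
    HasDerivAt (fun z => ∫ ξ, (z - ξ)⁻¹ ∂ν) (∫ ξ, -((z₀ - ξ) ^ 2)⁻¹ ∂ν) z₀ := by
  have hr2 : 0 < r / 2 := half_pos hr
  have hfar : ∀ᵐ ξ ∂ν, ∀ z ∈ ball z₀ (r / 2), r / 2 ≤ ‖z - ξ‖ := by
    filter_upwards [measure_eq_zero_iff_ae_notMem.1 hν] with ξ hξ z hz
    rw [mem_ball, not_lt] at hξ
    rw [mem_ball] at hz
    rw [← dist_eq_norm, dist_comm]
    linarith [dist_triangle ξ z z₀]
  have hmeas : ∀ z : ℂ, AEStronglyMeasurable (fun ξ : ℂ => (z - ξ)⁻¹) ν := fun z =>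
    (measurable_const.sub measurable_id).inv.aestronglyMeasurable
  refine (hasDerivAt_integral_of_dominated_loc_of_deriv_le (F' := fun z ξ => -((z - ξ) ^ 2)⁻¹)
    (bound := fun _ => ((r / 2) ^ 2)⁻¹)
    (ball_mem_nhds z₀ hr2) (.of_forall hmeas) ?_ ?_ ?_ (integrable_const _) ?_).2
  · refine (integrable_const (r / 2)⁻¹).mono' (hmeas z₀) ?_
    filter_upwards [hfar] with ξ hξ
    rw [norm_inv]
    exact inv_anti₀ hr2 (hξ z₀ (mem_ball_self hr2))
  · exact ((measurable_const.sub measurable_id).pow_const 2).inv.neg.aestronglyMeasurable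
  · filter_upwards [hfar] with ξ hξ z hz
    rw [norm_neg, norm_inv, norm_pow]
    exact inv_anti₀ (by positivity) (pow_le_pow_left₀ hr2.le (hξ z hz) 2)
  · filter_upwards [hfar] with ξ hξ z hz
    have hne : z - ξ ≠ 0 := norm_pos_iff.1 (hr2.trans_le (hξ z hz))
    simpa [neg_div, one_div, Pi.inv_def] using ((hasDerivAt_id z).sub_const ξ).inv hne

theorem differentiableOn_integral_inv_sub {U : Set ℂ} (hU : IsOpen U) (hν : ν U = 0) :
    DifferentiableOn ℂ (fun z => ∫ ξ, (z - ξ)⁻¹ ∂ν) U := by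
  intro z hz
  obtain ⟨r, hr, hball⟩ := Metric.isOpen_iff.1 hU z hz
  exact (hasDerivAt_integral_inv_sub hr (measure_mono_null hball hν)).differentiableAt
    |>.differentiableWithinAt

end CauchyTransform

theorem differentiableOn_cauchyTransform {μ : SignedMeasure ℂ} {U : Set ℂ} (hU : IsOpen U)
    (hμ : μ.totalVariation U = 0) : DifferentiableOn ℂ (cauchyTransform μ) U := by
  rw [SignedMeasure.totalVariation, Measure.add_apply, add_eq_zero] at hμ
  exact (differentiableOn_integral_inv_sub hU hμ.1).sub (differentiableOn_integral_inv_sub hU hμ.2)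

theorem branch_points_in_support_general
    (P Q R : Polynomial ℂ)
    (μ : SignedMeasure ℂ)
    (hae : ∀ᵐ z : ℂ ∂volume,
      P.eval z * (cauchyTransform μ z) ^ 2 + Q.eval z * cauchyTransform μ z + R.eval z = 0) :
    ∀ z₀ : ℂ, Odd ((Q ^ 2 - 4 * P * R).rootMultiplicity z₀) →
      ∀ U : Set ℂ, IsOpen U → z₀ ∈ U → μ.totalVariation U ≠ 0 := by
  intro z₀ hodd U hU hz₀ hμU
  set C := cauchyTransform μ
  have hC : DifferentiableOn ℂ C U := differentiableOn_cauchyTransform hU hμU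
  have hquad : Set.EqOn (fun z => P.eval z * C z ^ 2 + Q.eval z * C z + R.eval z) 0 U :=
    Measure.eqOn_open_of_ae_eq (ae_restrict_of_ae hae) hU
      (by have := hC.continuousOn; fun_prop) continuousOn_const
  refine Nat.not_even_iff_odd.2 hodd
    (even_rootMultiplicity_of_eventually_sq_eq (g := fun z => 2 * P.eval z * C z + Q.eval z) ?_ ?_)
  · have hCz₀ : AnalyticAt ℂ C z₀ := hC.analyticAt (hU.mem_nhds hz₀)
    have hPz₀ := AnalyticOnNhd.eval_polynomial (𝕜 := ℂ) P z₀ trivial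
    have hQz₀ := AnalyticOnNhd.eval_polynomial (𝕜 := ℂ) Q z₀ trivial
    fun_prop
  · filter_upwards [hU.mem_nhds hz₀] with z hz
    rw [← discrim_eq_sq_of_quadratic_eq_zero (by simpa [sq] using hquad hz)]
    simp [discrim]

/-- Let `P, Q, R` be polynomials with `P ≠ 0`, `P, Q` coprime and
discriminant `D = Q² - 4PR` not identically zero. If the Cauchy transform of a compactly
supported real signed measure `μ` satisfies `P 𝒞² + Q 𝒞 + R = 0` a.e. in `ℂ`, then every
root of `D` of odd multiplicity (i.e. every branching point of the algebraic function)
lies in the support of `μ`: every open neighborhood of such a root has nonzero total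
variation. -/
theorem branch_points_in_support
    (P Q R : Polynomial ℂ) (hP : P ≠ 0) (hcop : IsCoprime P Q)
    (hD : Q ^ 2 - 4 * P * R ≠ 0)
    (μ : SignedMeasure ℂ)
    (hsupp : ∃ K : Set ℂ, IsCompact K ∧ μ.totalVariation Kᶜ = 0)
    (hae : ∀ᵐ z : ℂ ∂volume,
      P.eval z * (cauchyTransform μ z) ^ 2 + Q.eval z * cauchyTransform μ z + R.eval z = 0) :
    ∀ z₀ : ℂ, Odd ((Q ^ 2 - 4 * P * R).rootMultiplicity z₀) →
      ∀ U : Set ℂ, IsOpen U → z₀ ∈ U → μ.totalVariation U ≠ 0 :=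
  branch_points_in_support_general P Q R μ hae
end

section
/- Let P, Q, R ∈ ℂ[z] with P and Q coprime, let z₀ be a simple zero of P, and set D := Q² − 4PR (so D(z₀) = Q(z₀)² ≠ 0). Let U be an open neighborhood of z₀ containing no other zero of P, and let g be an analytic function on U with g(z)² = D(z) for all z ∈ U and g(z₀) = Q(z₀). Then: (a) the solution branch 𝒞₁(z) = (−Q(z) + g(z))/(2P(z)) extends analytically across z₀ (i.e. has a removable singularity at z₀); and (b) the solution branch 𝒞₂(z) = (−Q(z) − g(z))/(2P(z)) has a simple pole at z₀ with residue −Q(z₀)/P′(z₀), which equals the residue of the rational function −Q/P at z₀. -/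
open Polynomial Filter Topology

/-! Multiplying `𝒞₁` by the conjugate `-Q - g` gives `𝒞₁ = 2R / (-Q - g)` wherever
`P ≠ 0`, and the right-hand side is analytic at `z₀` because `-Q(z₀) - g(z₀) = -2Q(z₀) ≠ 0`
(coprimality forbids `Q(z₀) = 0`). For `𝒞₂` and `-Q/P`, the factor `(z - z₀)/P(z)` tends
to `1/P'(z₀)` while the numerators are continuous with values `-2Q(z₀)` and `-Q(z₀)` at `z₀`. -/

theorem IsCoprime.eval_ne_zero_of_eval_eq_zero {R : Type*} [CommRing R] [Nontrivial R]
    {P Q : R[X]} (h : IsCoprime P Q) {x : R} (hx : P.eval x = 0) : Q.eval x ≠ 0 := by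
  have h_eval := h.map (evalRingHom x)
  simp only [coe_evalRingHom, hx] at h_eval
  exact (isCoprime_zero_left.mp h_eval).ne_zero

theorem div_two_mul_eq_two_mul_div_of_discrim_eq {K : Type*} [Field K] [NeZero (2 : K)]
    {a b c s : K} (hs : discrim a b c = s * s) (ha : a ≠ 0) (hbs : -b - s ≠ 0) :
    (-b + s) / (2 * a) = 2 * c / (-b - s) := by
  rw [div_eq_div_iff (mul_ne_zero two_ne_zero ha) hbs]
  rw [discrim] at hs
  linear_combination hs

theorem Polynomial.tendsto_sub_mul_div_eval_nhdsNE {𝕜 : Type*} [NontriviallyNormedField 𝕜]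
    {P : 𝕜[X]} {z₀ : 𝕜} (hz₀ : P.eval z₀ = 0) (hP' : P.derivative.eval z₀ ≠ 0)
    {f : 𝕜 → 𝕜} {a : 𝕜} (hf : Tendsto f (𝓝[≠] z₀) (𝓝 a)) :
    Tendsto (fun z => (z - z₀) * (f z / P.eval z)) (𝓝[≠] z₀)
      (𝓝 (a / P.derivative.eval z₀)) := by
  have hslope :
      Tendsto (fun z => P.eval z / (z - z₀)) (𝓝[≠] z₀) (𝓝 (P.derivative.eval z₀)) :=
    (P.hasDerivAt z₀).tendsto_slope.congr fun z => by simp [slope, hz₀, div_eq_inv_mul]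
  convert (hslope.inv₀ hP').mul hf using 1
  · ext z
    rw [inv_div]
    ring
  · rw [div_eq_inv_mul]

theorem analyticOnNhd_update_of_eventuallyEq_nhdsNE {𝕜 E : Type*}
    [NontriviallyNormedField 𝕜] [DecidableEq 𝕜] [NormedAddCommGroup E] [NormedSpace 𝕜 E]
    {f φ : 𝕜 → E} {U : Set 𝕜} {z₀ : 𝕜}
    (hf : ∀ z ∈ U, z ≠ z₀ → AnalyticAt 𝕜 f z) (hφ : AnalyticAt 𝕜 φ z₀)
    (hfφ : f =ᶠ[𝓝[≠] z₀] φ) : AnalyticOnNhd 𝕜 (Function.update f z₀ (φ z₀)) U := by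
  intro z hz
  rcases eq_or_ne z z₀ with rfl | hne
  · refine hφ.congr (eventuallyEq_nhds_of_eventuallyEq_nhdsNE ?_ (by simp)).symm
    exact (Function.update_eventuallyEq_nhdsNE f z z _).trans hfφ
  · refine (hf z hz hne).congr ?_
    filter_upwards [isOpen_ne.mem_nhds hne] with w hw
    exact (Function.update_of_ne hw _ _).symm

/-- Let `P, Q` be coprime, `z₀` a simple zero of `P`, and
`g` an analytic square root of the discriminant `D = Q² - 4PR` on a neighborhood `U` of
`z₀` containing no other zero of `P`, normalized by `g z₀ = Q z₀`. Then the branch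
`𝒞₁ = (-Q + g)/(2P)` extends analytically across `z₀`, while the branch
`𝒞₂ = (-Q - g)/(2P)` has a simple pole at `z₀` with residue `-Q(z₀)/P'(z₀)`, which is
also the residue of `-Q/P` at `z₀`. -/
theorem branch_behavior_at_simple_pole
    (P Q R : Polynomial ℂ) (hcop : IsCoprime P Q)
    (z₀ : ℂ) (hz₀ : P.eval z₀ = 0) (hz₀' : P.derivative.eval z₀ ≠ 0)
    (U : Set ℂ) (hU : IsOpen U) (hz₀U : z₀ ∈ U)
    (hPU : ∀ z ∈ U, P.eval z = 0 → z = z₀)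
    (g : ℂ → ℂ) (hg : AnalyticOnNhd ℂ g U)
    (hg2 : ∀ z ∈ U, (g z) ^ 2 = (Q ^ 2 - 4 * P * R).eval z)
    (hgz₀ : g z₀ = Q.eval z₀) :
    (∃ h : ℂ → ℂ, AnalyticOnNhd ℂ h U ∧
      ∀ z ∈ U, z ≠ z₀ → h z = (-Q.eval z + g z) / (2 * P.eval z)) ∧
    (Tendsto (fun z : ℂ => (z - z₀) * ((-Q.eval z - g z) / (2 * P.eval z)))
        (nhdsWithin z₀ {z₀}ᶜ) (nhds (-Q.eval z₀ / P.derivative.eval z₀)) ∧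
      -Q.eval z₀ / P.derivative.eval z₀ ≠ 0 ∧
      Tendsto (fun z : ℂ => (z - z₀) * (-Q.eval z / P.eval z))
        (nhdsWithin z₀ {z₀}ᶜ) (nhds (-Q.eval z₀ / P.derivative.eval z₀))) := by
  have hpoly (p : ℂ[X]) (z : ℂ) : AnalyticAt ℂ (fun w => p.eval w) z :=
    AnalyticOnNhd.eval_polynomial (𝕜 := ℂ) p z trivial
  have hPne {z} (hz : z ∈ U) (hne : z ≠ z₀) : P.eval z ≠ 0 := fun h => hne (hPU z hz h)
  have hQz₀ : Q.eval z₀ ≠ 0 := hcop.eval_ne_zero_of_eval_eq_zero hz₀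
  have hconj : -Q.eval z₀ - g z₀ ≠ 0 := by
    rw [hgz₀, ← neg_add', neg_ne_zero, ← two_mul]
    exact mul_ne_zero two_ne_zero hQz₀
  have hconj_analytic : AnalyticAt ℂ (fun z => -Q.eval z - g z) z₀ :=
    (hpoly Q z₀).neg.sub (hg z₀ hz₀U)
  have hC₁_analytic (z) (hz : z ∈ U) (hne : z ≠ z₀) :
      AnalyticAt ℂ (fun z => (-Q.eval z + g z) / (2 * P.eval z)) z :=
    ((hpoly Q z).neg.add (hg z hz)).div (analyticAt_const.mul (hpoly P z))
      (mul_ne_zero two_ne_zero (hPne hz hne))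
  have hC₁_rationalized : (fun z => (-Q.eval z + g z) / (2 * P.eval z))
      =ᶠ[𝓝[≠] z₀] fun z => 2 * R.eval z / (-Q.eval z - g z) := by
    filter_upwards [self_mem_nhdsWithin, nhdsWithin_le_nhds (hU.mem_nhds hz₀U),
      nhdsWithin_le_nhds (hconj_analytic.continuousAt.eventually_ne hconj)] with z hne hzU hz
    refine div_two_mul_eq_two_mul_div_of_discrim_eq ?_ (hPne hzU hne) hz
    simpa [discrim, sq] using (hg2 z hzU).symm
  refine ⟨⟨_, analyticOnNhd_update_of_eventuallyEq_nhdsNE hC₁_analytic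
      ((analyticAt_const.mul (hpoly R z₀)).div hconj_analytic hconj) hC₁_rationalized,
      fun z _ hz => Function.update_of_ne hz _ _⟩,
    ?_, div_ne_zero (neg_ne_zero.mpr hQz₀) hz₀', ?_⟩
  · have hnum := (hconj_analytic.continuousAt.div_const 2).continuousWithinAt (s := {z₀}ᶜ)
    convert tendsto_sub_mul_div_eval_nhdsNE hz₀ hz₀' hnum using 2 with z
    · rw [div_mul_eq_div_div]
    · simp only [hgz₀]
      ring
  · exact tendsto_sub_mul_div_eval_nhdsNE hz₀ hz₀'
      (hpoly Q z₀).neg.continuousAt.continuousWithinAt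
end
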